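/- Let (X,d,m) be a metric measure space and let p,q ∈ (1,∞) satisfy 1/p + 1/q = 1. Let Π be a family of q-test plans on X. Then for every f ∈ W^{1,p}_Π(X), the set G_{Π,p}(f) of (Π,p)-weak upper gradients of f is a convex subset of L^p(m) which is closed under pointwise minimum (if G₁,G₂ ∈ G_{Π,p}(f) then min{G₁,G₂} ∈ G_{Π,p}(f)) and is strongly closed in L^p(m). -/

import Mathlib

/-!
Everything is checked curve by curve. The derivative of `f ∘ γ` is determined a.e. by
`f ∘ γ`, so one derivative witness is bounded by every upper
gradient along `γ`; this gives closure under `min` and under limits. For a limit, an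
`L^p(m)`-convergent sequence has an `m`-a.e. convergent subsequence, and the bounded compression
of a test plan turns `m`-a.e. convergence into convergence at `γ_t` for `π ⊗ L¹`-a.e. `(γ, t)`.
-/

open MeasureTheory Filter Set Topology
open scoped NNReal ENNReal unitInterval

noncomputable section

namespace MasterTestPlan

variable {X : Type*} [MetricSpace X]

/-- The extension of a curve `γ : C([0,1], X)` to a function `ℝ → X`, obtained by
precomposing with the projection of `ℝ` onto `[0,1]`. -/
def curveExt (γ : C(unitInterval, X)) : ℝ → X :=
  fun t => γ (Set.projIcc 0 1 zero_le_one t)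

-- The metric speed `|γ̇_t|` of a curve at time `t`: the limit of `d(γ_{t+h}, γ_t)/|h|`
-- as `h → 0` when it exists, and `0` otherwise.
open Classical in
def metricSpeed (γ : C(unitInterval, X)) (t : ℝ) : ℝ :=
  if h : ∃ L : ℝ, Tendsto (fun h : ℝ => dist (curveExt γ (t + h)) (curveExt γ t) / |h|)
      (𝓝[≠] (0:ℝ)) (𝓝 L)
  then h.choose else 0

/-- A curve `γ ∈ C([0,1],X)` is absolutely continuous provided there exists `g ∈ L¹(0,1)`
with `d(γ_s, γ_t) ≤ ∫_s^t g(r) dr` for all `s ≤ t` in `[0,1]`. -/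
def IsACCurve (γ : C(unitInterval, X)) : Prop :=
  ∃ g : ℝ → ℝ, IntegrableOn g (Icc (0:ℝ) 1) ∧
    ∀ s t : ℝ, 0 ≤ s → s ≤ t → t ≤ 1 →
      dist (curveExt γ s) (curveExt γ t) ≤ ∫ r in s..t, g r

/-- `γ ∈ AC^q([0,1],X)`: `γ` is absolutely continuous and its metric speed belongs
to `L^q(0,1)`. -/
def MemACq (q : ℝ) (γ : C(unitInterval, X)) : Prop :=
  IsACCurve γ ∧ IntegrableOn (fun t => metricSpeed γ t ^ q) (Icc (0:ℝ) 1)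

/-- A curve is non-constant. -/
def IsNonconstant (γ : C(unitInterval, X)) : Prop :=
  ∃ s t : unitInterval, γ s ≠ γ t

/-- The slope (local Lipschitz constant) of `f : X → ℝ` at `x`: the limsup of
`|f x - f y| / d(x,y)` as `y → x`, `y ≠ x` (which takes the junk value `0` at
isolated points). -/
def slope' (f : X → ℝ) (x : X) : ℝ :=
  limsup (fun y => |f x - f y| / dist x y) (𝓝[≠] x)

/-- `f : X → ℝ` is Lipschitz with bounded support. -/
def LipschitzBddSupport (f : X → ℝ) : Prop :=
  (∃ K : ℝ≥0, LipschitzWith K f) ∧ Bornology.IsBounded (Function.support f)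

variable [MeasurableSpace X]

/-- `fs n → f` strongly in `L^p(m)`. -/
def TendstoLp (m : Measure X) (p : ℝ) (fs : ℕ → X → ℝ) (f : X → ℝ) : Prop :=
  Tendsto (fun n => eLpNorm (fun x => fs n x - f x) (ENNReal.ofReal p) m) atTop (𝓝 0)

/-- `p` times the Cheeger `p`-energy of `f`: the infimum of `liminf_n ∫ lip(f_n)^p dm`
over all sequences of Lipschitz functions with bounded support converging to `f`
in `L^p(m)` (with value `∞` if no such sequence exists). -/
def cheegerEnergy (m : Measure X) (p : ℝ) (f : X → ℝ) : ℝ≥0∞ :=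
  ⨅ (fs : ℕ → X → ℝ) (_ : (∀ n, LipschitzBddSupport (fs n)) ∧ TendstoLp m p fs f),
    liminf (fun n => ∫⁻ x, ENNReal.ofReal (slope' (fs n) x ^ p) ∂m) atTop

/-- `f` belongs to the Sobolev space `W^{1,p}(X)`. -/
def MemW1p (m : Measure X) (p : ℝ) (f : X → ℝ) : Prop :=
  MemLp f (ENNReal.ofReal p) m ∧ cheegerEnergy m p f < ⊤

/-- `G` is (a version of) the minimal `p`-relaxed slope `|Df|_p` of `f`: it is a
nonnegative function in `L^p(m)` realising the Cheeger `p`-energy of `f`,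
`∫ G^p dm = p E_{Ch,p}(f)`, which is an `L^p(m)`-strong limit of slopes along an
optimal approximating sequence. -/
def IsMinimalRelaxedSlope (m : Measure X) (p : ℝ) (f G : X → ℝ) : Prop :=
  MemLp G (ENNReal.ofReal p) m ∧ (∀ᵐ x ∂m, 0 ≤ G x) ∧
  (∃ fs : ℕ → X → ℝ, (∀ n, LipschitzBddSupport (fs n)) ∧ TendstoLp m p fs f ∧
    Tendsto (fun n => eLpNorm (fun x => slope' (fs n) x - G x) (ENNReal.ofReal p) m)
      atTop (𝓝 0)) ∧
  ∫⁻ x, ENNReal.ofReal (G x ^ p) ∂m = cheegerEnergy m p f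

variable [MeasurableSpace (C(unitInterval, X))]

/-- The kinetic `q`-energy `KE_q(π) = ∫∫₀¹ |γ̇_t|^q dt dπ(γ)` of a plan `π`. -/
def kineticEnergy (q : ℝ) (π : Measure (C(unitInterval, X))) : ℝ≥0∞ :=
  ∫⁻ γ, ∫⁻ t in Icc (0:ℝ) 1, ENNReal.ofReal (metricSpeed γ t ^ q) ∂volume ∂π

/-- A `q`-test plan on `(X,d,m)`: a Borel probability measure on `C([0,1],X)` with
bounded compression, concentrated on `AC^q([0,1],X)` and with finite kinetic
`q`-energy. -/
structure IsTestPlan (m : Measure X) (q : ℝ) (π : Measure (C(unitInterval, X))) : Prop where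
  isProb : IsProbabilityMeasure π
  compression : ∃ C : ℝ≥0, 0 < C ∧ ∀ t : unitInterval, π.map (fun γ => γ t) ≤ C • m
  conc : π {γ | ¬ MemACq q γ} = 0
  energy : kineticEnergy q π < ⊤

/-- An `∞`-test plan: a Borel probability measure on `C([0,1],X)` with bounded
compression which is concentrated on an equi-Lipschitz family of curves. -/
structure IsInftyTestPlan (m : Measure X) (π : Measure (C(unitInterval, X))) : Prop where
  isProb : IsProbabilityMeasure π
  compression : ∃ C : ℝ≥0, 0 < C ∧ ∀ t : unitInterval, π.map (fun γ => γ t) ≤ C • m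
  lip : ∃ L : ℝ≥0, π {γ | ¬ LipschitzWith L (fun t => γ t)} = 0

/-- The compression constant `Comp(π)` of a plan `π`. -/
def compCoeff (m : Measure X) (π : Measure (C(unitInterval, X))) : ℝ≥0∞ :=
  sInf {C : ℝ≥0∞ | ∀ t : unitInterval, π.map (fun γ => γ t) ≤ C • m}

/-- The `q`-energy functional `E_{q,t}(γ) = t (⨍₀^t |γ̇_s|^q ds)^{1/q}`. -/
def energyQ (q t : ℝ) (γ : C(unitInterval, X)) : ℝ :=
  t * (⨍ s in Ioc (0:ℝ) t, metricSpeed γ s ^ q) ^ (1/q)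

/-- `π` `q`-represents the gradient of `f`, whose minimal `p`-relaxed slope is `G`:
`(f∘e_t − f∘e_0)/E_{q,t} → G∘e_0` and `(E_{q,t}/t)^{q/p} → G∘e_0` strongly in
`L^p(π)` as `t ↓ 0`. -/
def RepresentsGradient (p q : ℝ) (π : Measure (C(unitInterval, X))) (f G : X → ℝ) : Prop :=
  Tendsto (fun t : ℝ => eLpNorm
      (fun γ => (f (curveExt γ t) - f (curveExt γ 0)) / energyQ q t γ - G (curveExt γ 0))
      (ENNReal.ofReal p) π) (𝓝[>] (0:ℝ)) (𝓝 0) ∧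
  Tendsto (fun t : ℝ => eLpNorm
      (fun γ => (energyQ q t γ / t) ^ (q / p) - G (curveExt γ 0))
      (ENNReal.ofReal p) π) (𝓝[>] (0:ℝ)) (𝓝 0)

/-- `G` is an upper gradient of `f` along the single curve `γ`: `f ∘ γ ∈ W^{1,1}(0,1)`
(indeed absolutely continuous) with `|(f∘γ)'(t)| ≤ G(γ_t)|γ̇_t|` for a.e. `t`. -/
def UpperGradientAlong (f G : X → ℝ) (γ : C(unitInterval, X)) : Prop :=
  ∃ h : ℝ → ℝ, IntegrableOn h (Icc (0:ℝ) 1) ∧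
    (∀ s t : ℝ, 0 ≤ s → s ≤ t → t ≤ 1 →
      f (curveExt γ t) - f (curveExt γ s) = ∫ r in s..t, h r) ∧
    (∀ᵐ t ∂(volume.restrict (Icc (0:ℝ) 1)), |h t| ≤ G (curveExt γ t) * metricSpeed γ t)

/-- `G` is a weak upper gradient of `f` along the plan `π`. -/
def WUGAlongPlan (f G : X → ℝ) (π : Measure (C(unitInterval, X))) : Prop :=
  ∀ᵐ γ ∂π, UpperGradientAlong f G γ

/-- The set `G_{Π,p}(f)` of `(Π,p)`-weak upper gradients of `f`. -/
def wugSet (m : Measure X) (p : ℝ) (P : Set (Measure (C(unitInterval, X)))) (f : X → ℝ) :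
    Set (X → ℝ) :=
  {G | MemLp G (ENNReal.ofReal p) m ∧ ∀ π ∈ P, WUGAlongPlan f G π}

/-- `f ∈ W^{1,p}_Π(X)`: `f ∈ L^p(m)` admits a `(Π,p)`-weak upper gradient. -/
def MemW1pPlans (m : Measure X) (p : ℝ) (P : Set (Measure (C(unitInterval, X))))
    (f : X → ℝ) : Prop :=
  MemLp f (ENNReal.ofReal p) m ∧ ∃ G, G ∈ wugSet m p P f

/-- `G` is (a version of) the minimal `(Π,p)`-weak upper gradient `|Df|_{Π,p}` of `f`. -/
def IsMinimalWUG (m : Measure X) (p : ℝ) (P : Set (Measure (C(unitInterval, X))))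
    (f G : X → ℝ) : Prop :=
  G ∈ wugSet m p P f ∧ ∀ G' ∈ wugSet m p P f, ∀ᵐ x ∂m, G x ≤ G' x

/-- The `p`-modulus `Mod_p(Γ)` of a family of curves `Γ`. -/
def pModulus (m : Measure X) (p : ℝ) (Γ : Set (C(unitInterval, X))) : ℝ≥0∞ :=
  ⨅ (ρ : X → ℝ≥0∞) (_ : Measurable ρ ∧ ∀ γ ∈ Γ,
      1 ≤ ∫⁻ t in Icc (0:ℝ) 1, ρ (curveExt γ t) * ENNReal.ofReal (metricSpeed γ t)),
    ∫⁻ x, ρ x ^ p ∂m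

/-- `G` is a `p`-weak upper gradient of the Borel function `fbar`: the family of
absolutely continuous curves along which the upper gradient property fails is
`Mod_p`-negligible. -/
def NewtWUG (m : Measure X) (p : ℝ) (fbar G : X → ℝ) : Prop :=
  pModulus m p {γ | IsACCurve γ ∧ ¬ UpperGradientAlong fbar G γ} = 0

/-- `f` belongs to the Newtonian space `N^{1,p}(X)`: `f ∈ L^p(m)` has a Borel
representative admitting a nonnegative `p`-weak upper gradient in `L^p(m)`. -/
def MemNewtonian (m : Measure X) (p : ℝ) (f : X → ℝ) : Prop :=
  MemLp f (ENNReal.ofReal p) m ∧ ∃ fbar G : X → ℝ, Measurable fbar ∧ fbar =ᵐ[m] f ∧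
    MemLp G (ENNReal.ofReal p) m ∧ (∀ x, 0 ≤ G x) ∧ NewtWUG m p fbar G

/-- `G` is (a version of) the minimal `p`-weak upper gradient `G_{f,p}` of `f` in the
Newtonian sense. -/
def IsMinimalNewtonianUG (m : Measure X) (p : ℝ) (f G : X → ℝ) : Prop :=
  MemLp G (ENNReal.ofReal p) m ∧ (∀ x, 0 ≤ G x) ∧
  (∃ fbar, Measurable fbar ∧ fbar =ᵐ[m] f ∧ NewtWUG m p fbar G) ∧
  (∀ fbar' G' : X → ℝ, Measurable fbar' → fbar' =ᵐ[m] f →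
    MemLp G' (ENNReal.ofReal p) m → (∀ x, 0 ≤ G' x) → NewtWUG m p fbar' G' →
    ∀ᵐ x ∂m, G x ≤ G' x)

/-- `π` is a master `q`-test plan (relative to the exponent `p`):
`W^{1,p}(X) ⊆ W^{1,p}_π(X)` and `|Df|_{π,p} = |Df|_p` `m`-a.e. for every
`f ∈ W^{1,p}(X)`. -/
def IsMasterPlan (m : Measure X) (p : ℝ) (π : Measure (C(unitInterval, X))) : Prop :=
  (∀ f : X → ℝ, MemW1p m p f → MemW1pPlans m p {π} f) ∧
  (∀ f G : X → ℝ, MemW1p m p f → IsMinimalRelaxedSlope m p f G →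
    IsMinimalWUG m p {π} f G)

/-- The Sobolev space `W^{1,p}(X)` is separable: there is a countable family of Sobolev
functions approximating every Sobolev function both in `L^p(m)` and in Cheeger energy
of the difference. -/
def W1pSeparable (m : Measure X) (p : ℝ) : Prop :=
  ∃ D : Set (X → ℝ), D.Countable ∧ (∀ g ∈ D, MemW1p m p g) ∧
    ∀ f : X → ℝ, MemW1p m p f → ∀ ε : ℝ, 0 < ε → ∃ g ∈ D,
      eLpNorm (fun x => f x - g x) (ENNReal.ofReal p) m < ENNReal.ofReal ε ∧
      cheegerEnergy m p (fun x => f x - g x) < ENNReal.ofReal ε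

/-- The restriction map `restr_s^t : C([0,1],X) → C([0,1],X)`,
`restr_s^t(γ)_r = γ_{rt+(1-r)s}`. -/
def restrMap (s t : ℝ) (hs : 0 ≤ s) (hst : s ≤ t) (ht : t ≤ 1)
    (γ : C(unitInterval, X)) : C(unitInterval, X) where
  toFun r := γ ⟨(r : ℝ) * t + (1 - (r : ℝ)) * s, by
    refine Set.mem_Icc.mpr ⟨?_, ?_⟩
    · nlinarith [r.2.1, r.2.2, mul_nonneg r.2.1 (hs.trans hst),
        mul_nonneg (sub_nonneg.mpr r.2.2) hs]
    · nlinarith [r.2.1, r.2.2, mul_le_mul_of_nonneg_left ht r.2.1,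
        mul_le_mul_of_nonneg_left (hst.trans ht) (sub_nonneg.mpr r.2.2)]⟩
  continuous_toFun := by
    refine γ.continuous.comp ?_
    refine Continuous.subtype_mk ?_ _
    fun_prop

end MasterTestPlan

namespace MasterTestPlan

variable {X : Type*} [MetricSpace X] [CompleteSpace X] [TopologicalSpace.SeparableSpace X]
  [MeasurableSpace X] [BorelSpace X] [MeasurableSpace (C(unitInterval, X))]
  [BorelSpace (C(unitInterval, X))]

theorem ae_eq_of_forall_intervalIntegral_eq {a b : ℝ} {h₁ h₂ : ℝ → ℝ}
    (hint₁ : IntervalIntegrable h₁ volume a b) (hint₂ : IntervalIntegrable h₂ volume a b)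
    (heq : ∀ t ∈ Ioo a b, ∫ r in a..t, h₁ r = ∫ r in a..t, h₂ r) :
    ∀ᵐ t ∂(volume.restrict (Icc a b)), h₁ t = h₂ t := by
  rw [← Measure.restrict_congr_set Ioo_ae_eq_Icc]
  filter_upwards [ae_restrict_mem measurableSet_Ioo,
    ae_restrict_of_ae hint₁.ae_hasDerivAt_integral,
    ae_restrict_of_ae hint₂.ae_hasDerivAt_integral] with x hx hderiv₁ hderiv₂
  have hxab : x ∈ uIcc a b := Icc_subset_uIcc (Ioo_subset_Icc_self hx)
  have hprim : (fun t => ∫ r in a..t, h₁ r) =ᶠ[𝓝 x] fun t => ∫ r in a..t, h₂ r :=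
    eventually_of_mem (Ioo_mem_nhds hx.1 hx.2) heq
  exact ((hderiv₁ hxab a left_mem_uIcc).congr_of_eventuallyEq hprim.symm).unique
    (hderiv₂ hxab a left_mem_uIcc)

section Curves

variable {Y : Type*} [MetricSpace Y]

theorem metricSpeed_nonneg (γ : C(unitInterval, Y)) (t : ℝ) : 0 ≤ metricSpeed γ t := by
  rw [metricSpeed]
  split_ifs with h
  · exact ge_of_tendsto h.choose_spec
      (Eventually.of_forall fun _ => div_nonneg dist_nonneg (abs_nonneg _))
  · exact le_rfl

theorem continuous_curveExt_uncurry :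
    Continuous fun γt : C(unitInterval, Y) × ℝ => curveExt γt.1 γt.2 :=
  continuous_eval.comp <| continuous_fst.prodMk <|
    (continuous_projIcc (h := zero_le_one)).comp continuous_snd

variable {f G G₁ G₂ : Y → ℝ} {γ : C(unitInterval, Y)}

/-- `h` agrees a.e. with the witness in `hG`: both are the a.e. derivative of `f ∘ γ`. -/
theorem UpperGradientAlong.abs_le_of_integral_eq (hG : UpperGradientAlong f G γ) {h : ℝ → ℝ}
    (hint : IntegrableOn h (Icc (0:ℝ) 1))
    (hid : ∀ t ∈ Icc (0:ℝ) 1, f (curveExt γ t) - f (curveExt γ 0) = ∫ r in (0:ℝ)..t, h r) :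
    ∀ᵐ t ∂(volume.restrict (Icc (0:ℝ) 1)), |h t| ≤ G (curveExt γ t) * metricSpeed γ t := by
  obtain ⟨h', hint', hid', hbound'⟩ := hG
  have hii : ∀ {g : ℝ → ℝ}, IntegrableOn g (Icc (0:ℝ) 1) → IntervalIntegrable g volume 0 1 :=
    fun hg => (uIcc_of_le (zero_le_one' ℝ) ▸ hg).intervalIntegrable
  have heq := ae_eq_of_forall_intervalIntegral_eq (hii hint) (hii hint') fun t ht => by
    rw [← hid t (Ioo_subset_Icc_self ht), hid' 0 t le_rfl ht.1.le ht.2.le]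
  filter_upwards [heq, hbound'] with t ht hbound
  rwa [ht]

theorem UpperGradientAlong.min (hG₁ : UpperGradientAlong f G₁ γ)
    (hG₂ : UpperGradientAlong f G₂ γ) :
    UpperGradientAlong f (fun x => min (G₁ x) (G₂ x)) γ := by
  obtain ⟨h, hint, hid, hbound₁⟩ := hG₁
  refine ⟨h, hint, hid, ?_⟩
  filter_upwards [hbound₁, hG₂.abs_le_of_integral_eq hint
    fun t ht => hid 0 t le_rfl ht.1 ht.2] with t ht₁ ht₂
  rw [min_mul_of_nonneg _ _ (metricSpeed_nonneg γ t)]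
  exact le_min ht₁ ht₂

theorem UpperGradientAlong.convex_combo {a b : ℝ} (ha : 0 ≤ a) (hb : 0 ≤ b) (hab : a + b = 1)
    (hG₁ : UpperGradientAlong f G₁ γ) (hG₂ : UpperGradientAlong f G₂ γ) :
    UpperGradientAlong f (fun x => a * G₁ x + b * G₂ x) γ := by
  obtain ⟨h₁, hint₁, hid₁, hbound₁⟩ := hG₁
  obtain ⟨h₂, hint₂, hid₂, hbound₂⟩ := hG₂
  refine ⟨fun r => a * h₁ r + b * h₂ r, (hint₁.const_mul a).add (hint₂.const_mul b), ?_, ?_⟩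
  · intro s t hs hst ht
    have hsub : uIcc s t ⊆ Icc (0:ℝ) 1 := by
      rw [uIcc_of_le hst]
      exact Icc_subset_Icc hs ht
    rw [intervalIntegral.integral_add
        (((hint₁.mono_set hsub).intervalIntegrable).const_mul a)
        (((hint₂.mono_set hsub).intervalIntegrable).const_mul b),
      intervalIntegral.integral_const_mul, intervalIntegral.integral_const_mul,
      ← hid₁ s t hs hst ht, ← hid₂ s t hs hst ht]
    linear_combination (f (curveExt γ s) - f (curveExt γ t)) * hab
  · filter_upwards [hbound₁, hbound₂] with t ht₁ ht₂
    set v := metricSpeed γ t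
    calc |a * h₁ t + b * h₂ t| ≤ a * |h₁ t| + b * |h₂ t| := by
          simpa only [abs_mul, abs_of_nonneg ha, abs_of_nonneg hb]
            using abs_add_le (a * h₁ t) (b * h₂ t)
      _ ≤ a * (G₁ (curveExt γ t) * v) + b * (G₂ (curveExt γ t) * v) := by gcongr
      _ = (a * G₁ (curveExt γ t) + b * G₂ (curveExt γ t)) * v := by ring

theorem UpperGradientAlong.of_tendsto {Gs : ℕ → Y → ℝ}
    (hGs : ∀ k, UpperGradientAlong f (Gs k) γ)
    (hlim : ∀ᵐ t ∂(volume.restrict (Icc (0:ℝ) 1)),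
      Tendsto (fun k => Gs k (curveExt γ t)) atTop (𝓝 (G (curveExt γ t)))) :
    UpperGradientAlong f G γ := by
  obtain ⟨h, hint, hid, -⟩ := hGs 0
  refine ⟨h, hint, hid, ?_⟩
  have hbound : ∀ k, ∀ᵐ t ∂(volume.restrict (Icc (0:ℝ) 1)),
      |h t| ≤ Gs k (curveExt γ t) * metricSpeed γ t :=
    fun k => (hGs k).abs_le_of_integral_eq hint fun t ht => hid 0 t le_rfl ht.1 ht.2
  filter_upwards [ae_all_iff.mpr hbound, hlim] with t ht htendsto
  exact ge_of_tendsto (htendsto.mul_const _) (Eventually.of_forall ht)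

variable [MeasurableSpace (C(unitInterval, Y))] {π : Measure (C(unitInterval, Y))}

theorem WUGAlongPlan.min (hG₁ : WUGAlongPlan f G₁ π) (hG₂ : WUGAlongPlan f G₂ π) :
    WUGAlongPlan f (fun x => min (G₁ x) (G₂ x)) π := by
  filter_upwards [hG₁, hG₂] with γ hγ₁ hγ₂ using hγ₁.min hγ₂

theorem WUGAlongPlan.convex_combo {a b : ℝ} (ha : 0 ≤ a) (hb : 0 ≤ b) (hab : a + b = 1)
    (hG₁ : WUGAlongPlan f G₁ π) (hG₂ : WUGAlongPlan f G₂ π) :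
    WUGAlongPlan f (fun x => a * G₁ x + b * G₂ x) π := by
  filter_upwards [hG₁, hG₂] with γ hγ₁ hγ₂ using hγ₁.convex_combo ha hb hab hγ₂

variable [OpensMeasurableSpace (C(unitInterval, Y))] [MeasurableSpace Y] [BorelSpace Y]
  {m : Measure Y}

/-- Bounded compression transfers `m`-negligible sets to `π ⊗ L¹`-negligible sets of
`(γ, t)`, by Fubini. -/
theorem ae_ae_curveExt_of_ae [SFinite π] {C : ℝ≥0}
    (hC : ∀ t : unitInterval, π.map (fun γ => γ t) ≤ C • m) {P : Y → Prop} (hP : ∀ᵐ x ∂m, P x) :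
    ∀ᵐ γ ∂π, ∀ᵐ t ∂(volume.restrict (Icc (0:ℝ) 1)), P (curveExt γ t) := by
  obtain ⟨N, hPN, hNmeas, hN⟩ := exists_measurable_superset_of_null hP
  have hslice : ∀ t : ℝ, π {γ | curveExt γ t ∈ N} = 0 := fun t => by
    have heval : Measurable fun γ : C(unitInterval, Y) => γ (projIcc 0 1 zero_le_one t) :=
      (continuous_eval_const _).measurable
    refine le_antisymm ?_ zero_le
    calc π {γ | curveExt γ t ∈ N} = π.map (fun γ => γ (projIcc 0 1 zero_le_one t)) N :=
          (Measure.map_apply heval hNmeas).symm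
      _ ≤ (C • m) N := hC _ N
      _ = 0 := by rw [Measure.smul_apply, hN, smul_zero]
  have hprod : (π.prod (volume.restrict (Icc (0:ℝ) 1)))
      ((fun γt : C(unitInterval, Y) × ℝ => curveExt γt.1 γt.2) ⁻¹' N) = 0 := by
    rw [Measure.prod_apply_symm (continuous_curveExt_uncurry.measurable hNmeas)]
    exact (lintegral_congr fun t => hslice t).trans lintegral_zero
  filter_upwards [Measure.ae_ae_of_ae_prod (measure_eq_zero_iff_ae_notMem.mp hprod)] with γ hγ
  filter_upwards [hγ] with t ht
  by_contra hnot
  exact ht (hPN hnot)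

theorem WUGAlongPlan.of_ae_tendsto [SFinite π] {C : ℝ≥0}
    (hC : ∀ t : unitInterval, π.map (fun γ => γ t) ≤ C • m) {Gs : ℕ → Y → ℝ}
    (hGs : ∀ k, WUGAlongPlan f (Gs k) π)
    (hlim : ∀ᵐ x ∂m, Tendsto (fun k => Gs k x) atTop (𝓝 (G x))) :
    WUGAlongPlan f G π := by
  filter_upwards [ae_ae_curveExt_of_ae hC hlim, ae_all_iff.mpr hGs] with γ hγlim hγ
  exact UpperGradientAlong.of_tendsto hγ hγlim

end Curves

theorem statement3_general (m : Measure X)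
    (p q : ℝ) (hp : 1 < p)
    (P : Set (Measure (C(unitInterval, X)))) (hP : ∀ π ∈ P, IsTestPlan m q π)
    (f : X → ℝ) :
    (∀ G₁ ∈ wugSet m p P f, ∀ G₂ ∈ wugSet m p P f,
      (fun x => min (G₁ x) (G₂ x)) ∈ wugSet m p P f) ∧
    (∀ G₁ ∈ wugSet m p P f, ∀ G₂ ∈ wugSet m p P f, ∀ a b : ℝ, 0 ≤ a → 0 ≤ b → a + b = 1 →
      (fun x => a * G₁ x + b * G₂ x) ∈ wugSet m p P f) ∧
    (∀ (Gs : ℕ → X → ℝ) (G : X → ℝ), (∀ n, Gs n ∈ wugSet m p P f) →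
      MemLp G (ENNReal.ofReal p) m →
      Tendsto (fun n => eLpNorm (fun x => Gs n x - G x) (ENNReal.ofReal p) m) atTop (𝓝 0) →
      G ∈ wugSet m p P f) := by
  refine ⟨?_, ?_, ?_⟩
  · rintro G₁ ⟨hG₁, hwug₁⟩ G₂ ⟨hG₂, hwug₂⟩
    exact ⟨hG₁.inf hG₂, fun π hπ => (hwug₁ π hπ).min (hwug₂ π hπ)⟩
  · rintro G₁ ⟨hG₁, hwug₁⟩ G₂ ⟨hG₂, hwug₂⟩ a b ha hb hab
    exact ⟨(hG₁.const_mul a).add (hG₂.const_mul b),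
      fun π hπ => (hwug₁ π hπ).convex_combo ha hb hab (hwug₂ π hπ)⟩
  · intro Gs G hGs hG hconv
    have hp₀ : ENNReal.ofReal p ≠ 0 := (ENNReal.ofReal_pos.mpr (zero_lt_one.trans hp)).ne'
    obtain ⟨ns, -, hlim⟩ := (tendstoInMeasure_of_tendsto_eLpNorm hp₀
      (fun n => (hGs n).1.aestronglyMeasurable) hG.aestronglyMeasurable
      hconv).exists_seq_tendsto_ae
    refine ⟨hG, fun π hπ => ?_⟩
    have := (hP π hπ).isProb
    obtain ⟨C, -, hC⟩ := (hP π hπ).compression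
    exact WUGAlongPlan.of_ae_tendsto hC (fun k => (hGs (ns k)).2 π hπ) hlim

/-- Lemma 1.8: for `f ∈ W^{1,p}_Π(X)`, the set `G_{Π,p}(f)` of `(Π,p)`-weak upper
gradients of `f` is a lattice (closed under `min`), convex, and strongly closed
in `L^p(m)`. -/
theorem statement3 (m : Measure X)
    (hm : ∀ s : Set X, Bornology.IsBounded s → m s < ⊤)
    (p q : ℝ) (hp : 1 < p) (hq : 1 < q) (hpq : 1/p + 1/q = 1)
    (P : Set (Measure (C(unitInterval, X)))) (hP : ∀ π ∈ P, IsTestPlan m q π)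
    (f : X → ℝ) (hf : MemW1pPlans m p P f) :
    (∀ G₁ ∈ wugSet m p P f, ∀ G₂ ∈ wugSet m p P f,
      (fun x => min (G₁ x) (G₂ x)) ∈ wugSet m p P f) ∧
    (∀ G₁ ∈ wugSet m p P f, ∀ G₂ ∈ wugSet m p P f, ∀ a b : ℝ, 0 ≤ a → 0 ≤ b → a + b = 1 →
      (fun x => a * G₁ x + b * G₂ x) ∈ wugSet m p P f) ∧
    (∀ (Gs : ℕ → X → ℝ) (G : X → ℝ), (∀ n, Gs n ∈ wugSet m p P f) →
      MemLp G (ENNReal.ofReal p) m →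
      Tendsto (fun n => eLpNorm (fun x => Gs n x - G x) (ENNReal.ofReal p) m) atTop (𝓝 0) →
      G ∈ wugSet m p P f) :=
  statement3_general m p q hp P hP f
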